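/- Let V and W be complex vector spaces of complex dimension 1, T : V → W a bijective real-linear map, w ∈ W nonzero, and u, v ∈ V nonzero with v = a • u for a (necessarily nonzero) complex number a. Consider the real-linear maps S_u = f_w ∘ T ∘ f_u⁻¹ and S_v = f_w ∘ T ∘ f_v⁻¹ from ℂ to ℂ. If (S_u)_z ≠ 0, then (S_v)_z ≠ 0 and μ_{S_v} = (conj(a)/a)·μ_{S_u}; that is, replacing the reference vector u by v = a•u multiplies the complex dilatation π_T(u) by σ = conj(a)/a. -/

import Mathlib

/-!
A real-linear `S : ℂ → ℂ` is `z ↦ S_z z + S_z̄ z̄`. Since `f_v⁻¹ z = z • v = (z a) • u`, the map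
`S_v` is `S_u` precomposed with multiplication by `a`, which multiplies `S_z` by `a` and `S_z̄`
by `conj a`.
-/

open Complex ComplexConjugate

namespace Complex

noncomputable def wirtingerZ (S : ℂ →ₗ[ℝ] ℂ) : ℂ := (S 1 - I * S I) / 2

noncomputable def wirtingerZbar (S : ℂ →ₗ[ℝ] ℂ) : ℂ := (S 1 + I * S I) / 2

variable (S : ℂ →ₗ[ℝ] ℂ)

theorem linearMap_apply_eq_re_mul_add_im_mul (z : ℂ) : S z = z.re * S 1 + z.im * S I := by
  have hz : z = z.re • (1 : ℂ) + z.im • I := by rw [real_smul, real_smul, mul_one, re_add_im]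
  rw [hz, map_add, map_smul, map_smul, real_smul, real_smul]
  simp

theorem linearMap_apply_eq_wirtinger (z : ℂ) :
    S z = wirtingerZ S * z + wirtingerZbar S * conj z := by
  rw [linearMap_apply_eq_re_mul_add_im_mul, wirtingerZ, wirtingerZbar]
  conv_rhs => rw [← re_add_im z]
  simp only [map_add, map_mul, conj_ofReal, conj_I]
  linear_combination z.im * S I * I_sq

theorem wirtingerZ_comp_mulLeft (a : ℂ) :
    wirtingerZ (S ∘ₗ LinearMap.mulLeft ℝ a) = a * wirtingerZ S := by
  rw [wirtingerZ, LinearMap.comp_apply, LinearMap.comp_apply, LinearMap.mulLeft_apply,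
    LinearMap.mulLeft_apply, mul_one, linearMap_apply_eq_wirtinger S a,
    linearMap_apply_eq_wirtinger S (a * I), map_mul, conj_I]
  linear_combination (conj a * wirtingerZbar S - a * wirtingerZ S) / 2 * I_sq

theorem wirtingerZbar_comp_mulLeft (a : ℂ) :
    wirtingerZbar (S ∘ₗ LinearMap.mulLeft ℝ a) = conj a * wirtingerZbar S := by
  rw [wirtingerZbar, LinearMap.comp_apply, LinearMap.comp_apply, LinearMap.mulLeft_apply,
    LinearMap.mulLeft_apply, mul_one, linearMap_apply_eq_wirtinger S a,
    linearMap_apply_eq_wirtinger S (a * I), map_mul, conj_I]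
  linear_combination (a * wirtingerZ S - conj a * wirtingerZbar S) / 2 * I_sq

end Complex

theorem LinearEquiv.symm_apply_eq_smul_of_apply_eq_one {R M : Type*} [CommSemiring R]
    [AddCommMonoid M] [Module R M] (f : M ≃ₗ[R] R) {u : M} (hu : f u = 1) (z : R) :
    f.symm z = z • u := by
  rw [f.symm_apply_eq, map_smul, hu, smul_eq_mul, mul_one]

theorem dilatation_of_source_vector_change_general
    {V W : Type*} [AddCommGroup V] [Module ℝ V] [Module ℂ V] [IsScalarTower ℝ ℂ V]
    [AddCommGroup W] [Module ℝ W] [Module ℂ W] [IsScalarTower ℝ ℂ W]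
    (T : V →ₗ[ℝ] W)
    (u v : V) (hv : v ≠ 0) (a : ℂ) (hva : v = a • u)
    (fu fv : V ≃ₗ[ℂ] ℂ) (hfu : fu u = 1) (hfv : fv v = 1)
    (fw : W →ₗ[ℂ] ℂ)
    (Suz Suzb Svz Svzb : ℂ)
    (hSuz : Suz = (fw (T (fu.symm 1)) - Complex.I * fw (T (fu.symm Complex.I))) / 2)
    (hSuzb : Suzb = (fw (T (fu.symm 1)) + Complex.I * fw (T (fu.symm Complex.I))) / 2)
    (hSvz : Svz = (fw (T (fv.symm 1)) - Complex.I * fw (T (fv.symm Complex.I))) / 2)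
    (hSvzb : Svzb = (fw (T (fv.symm 1)) + Complex.I * fw (T (fv.symm Complex.I))) / 2)
    (hSuz0 : Suz ≠ 0) :
    Svz ≠ 0 ∧ Svzb / Svz = ((starRingEnd ℂ) a / a) * (Suzb / Suz) := by
  have ha : a ≠ 0 := by
    rintro rfl
    exact hv (by rw [hva, zero_smul])
  let S : (V ≃ₗ[ℂ] ℂ) → ℂ →ₗ[ℝ] ℂ := fun f =>
    fw.restrictScalars ℝ ∘ₗ T ∘ₗ (f.symm : ℂ →ₗ[ℂ] V).restrictScalars ℝ
  have hSv : S fv = S fu ∘ₗ LinearMap.mulLeft ℝ a := LinearMap.ext fun z => by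
    simp only [S, LinearMap.comp_apply, LinearMap.mulLeft_apply, LinearMap.restrictScalars_apply,
      LinearEquiv.coe_coe, fv.symm_apply_eq_smul_of_apply_eq_one hfv,
      fu.symm_apply_eq_smul_of_apply_eq_one hfu, hva, smul_smul, mul_comm]
  have hz : Svz = a * Suz := by
    rw [hSvz, hSuz]
    exact (congrArg wirtingerZ hSv).trans (wirtingerZ_comp_mulLeft _ a)
  have hzbar : Svzb = conj a * Suzb := by
    rw [hSvzb, hSuzb]
    exact (congrArg wirtingerZbar hSv).trans (wirtingerZbar_comp_mulLeft _ a)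
  refine ⟨hz ▸ mul_ne_zero ha hSuz0, ?_⟩
  rw [hz, hzbar, mul_div_mul_comm]

/-- For a bijective real-linear map `T : V → W` between 1-dimensional complex vector
spaces, replacing the reference vector `u ∈ V` by `v = a • u` multiplies the complex
dilatation `π_T(u)` (the dilatation of `f_w ∘ T ∘ f_u⁻¹ : ℂ → ℂ`) by `σ = conj(a)/a`. -/
theorem dilatation_of_source_vector_change
    {V W : Type*} [AddCommGroup V] [Module ℝ V] [Module ℂ V] [IsScalarTower ℝ ℂ V]
    [AddCommGroup W] [Module ℝ W] [Module ℂ W] [IsScalarTower ℝ ℂ W]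
    (hdV : Module.finrank ℂ V = 1) (hdW : Module.finrank ℂ W = 1)
    (T : V →ₗ[ℝ] W) (hT : Function.Bijective T)
    (u v : V) (hu : u ≠ 0) (hv : v ≠ 0) (a : ℂ) (hva : v = a • u)
    (w : W) (hw : w ≠ 0)
    (fu fv : V ≃ₗ[ℂ] ℂ) (hfu : fu u = 1) (hfv : fv v = 1)
    (fw : W →ₗ[ℂ] ℂ) (hfw : fw w = 1)
    (Suz Suzb Svz Svzb : ℂ)
    (hSuz : Suz = (fw (T (fu.symm 1)) - Complex.I * fw (T (fu.symm Complex.I))) / 2)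
    (hSuzb : Suzb = (fw (T (fu.symm 1)) + Complex.I * fw (T (fu.symm Complex.I))) / 2)
    (hSvz : Svz = (fw (T (fv.symm 1)) - Complex.I * fw (T (fv.symm Complex.I))) / 2)
    (hSvzb : Svzb = (fw (T (fv.symm 1)) + Complex.I * fw (T (fv.symm Complex.I))) / 2)
    (hSuz0 : Suz ≠ 0) :
    Svz ≠ 0 ∧ Svzb / Svz = ((starRingEnd ℂ) a / a) * (Suzb / Suz) :=
  dilatation_of_source_vector_change_general T u v hv a hva fu fv hfu hfv fw Suz Suzb Svz Svzb hSuz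
    hSuzb hSvz hSvzb hSuz0
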